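/- Projection sandwich for subsets of coordinate k-planes: let V be an affine subspace of EuclideanSpace ℝ (Fin n) of dimension k and let S ⊆ V be a Borel set. Then μH[k](S) ≤ Σ_γ μH[k](π_γ '' S) ≤ √(C(n,k)) · μH[k](S), where the sum runs over all subsets γ of {0,…,n−1} of cardinality k, π_γ is the coordinate projection onto the coordinates in γ, and C(n,k) is the binomial coefficient n choose k. -/

import Mathlib

open MeasureTheory Finset

/-- The coordinate projection `π_γ : ℝⁿ → ℝᵏ` associated to a `k`-element subset
`γ` of the coordinates: it sends `x` to the vector of its coordinates with indices
in `γ`, listed in increasing order. -/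
noncomputable def coordProj {n k : ℕ} (γ : Finset (Fin n)) (h : γ.card = k) :
    EuclideanSpace ℝ (Fin n) → EuclideanSpace ℝ (Fin k) :=
  fun x => WithLp.toLp 2 (fun i => x (γ.orderEmbOfFin h i))

/-!
Parametrize `V` as `x ↦ p + f x` with `f : ℝᵏ → ℝⁿ` a linear isometry. Then `π_γ ∘ f` is a
linear endomorphism of `ℝᵏ`, on which `μH[k]` is a Haar measure, so `π_γ` scales the measure
of `S` by `|d_γ|`, where `d_γ` is the `γ`-minor of the matrix `M` of `f`. The columns of `M`
are orthonormal, so Cauchy–Binet gives `∑ d_γ² = det (Mᵀ M) = 1`. Hence every `|d_γ| ≤ 1`,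
so `1 = ∑ d_γ² ≤ ∑ |d_γ|`, and `∑ |d_γ| ≤ √C(n,k)` by Cauchy–Schwarz.
-/

section CauchyBinet

open Equiv Matrix

variable {m : Type*} [Fintype m] {k : ℕ} {R : Type*} [CommRing R]

theorem Matrix.det_mul_eq_sum_prod_mul_det_submatrix (A : Matrix (Fin k) m R)
    (B : Matrix m (Fin k) R) :
    (A * B).det = ∑ p : Fin k → m, (∏ i, B (p i) i) * (A.submatrix id p).det := by
  simp only [det_apply', mul_apply, prod_univ_sum, Finset.mul_sum, Fintype.piFinset_univ,
    submatrix_apply, id_eq, prod_mul_distrib]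
  rw [sum_comm]
  exact sum_congr rfl fun p _ => sum_congr rfl fun σ _ => by ring

variable [LinearOrder m]

-- An injective `p` is `orderEmbOfFin` of its range composed with a unique permutation.
theorem Finset.sum_filter_injective_eq_sum_powersetCard_sum_perm {M : Type*} [AddCommMonoid M]
    (f : (Fin k → m) → M) :
    ∑ p with Function.Injective p, f p =
      ∑ γ ∈ (powersetCard k (univ : Finset m)).attach, ∑ τ : Perm (Fin k),
        f (γ.1.orderEmbOfFin (mem_powersetCard.mp γ.2).2 ∘ τ) := by
  classical
  rw [← sum_product']
  refine (sum_bij (fun x _ => x.1.1.orderEmbOfFin (mem_powersetCard.mp x.1.2).2 ∘ x.2)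
    (fun x _ => (mem_filter_univ _).mpr ((orderEmbOfFin _ _).injective.comp x.2.injective))
    ?_ ?_ fun _ _ => rfl).symm
  · rintro ⟨γ₁, τ₁⟩ - ⟨γ₂, τ₂⟩ - heq
    have range_eq : ∀ (γ : {γ // γ ∈ powersetCard k (univ : Finset m)}) (τ : Perm (Fin k)),
        Set.range (γ.1.orderEmbOfFin (mem_powersetCard.mp γ.2).2 ∘ τ) = γ.1 := fun γ τ => by
      rw [Set.range_comp, τ.range_eq_univ, Set.image_univ, range_orderEmbOfFin]
    obtain rfl : γ₁ = γ₂ :=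
      Subtype.ext (coe_injective (by rw [← range_eq γ₁ τ₁, ← range_eq γ₂ τ₂, heq]))
    obtain rfl : τ₁ = τ₂ := Equiv.ext fun i => (orderEmbOfFin _ _).injective (congrFun heq i)
    rfl
  · intro p hp
    replace hp : Function.Injective p := (mem_filter_univ _).mp hp
    set γ : Finset m := univ.map ⟨p, hp⟩
    have hγ : γ.card = k := by simp [γ]
    have mem_γ : ∀ i, p i ∈ γ := fun i => mem_map_of_mem _ (mem_univ i)
    let τ : Fin k → Fin k := fun i => (γ.orderIsoOfFin hγ).symm ⟨p i, mem_γ i⟩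
    have hτ : Function.Injective τ := fun i j hij =>
      hp (congrArg Subtype.val ((γ.orderIsoOfFin hγ).symm.injective hij))
    refine ⟨(⟨γ, mem_powersetCard.mpr ⟨subset_univ _, hγ⟩⟩,
      Equiv.ofBijective τ (Finite.injective_iff_bijective.mp hτ)), mem_univ _, ?_⟩
    funext i
    simp [τ, ← coe_orderIsoOfFin_apply]

/-- **Cauchy–Binet formula**. -/
theorem Matrix.det_mul_eq_sum_det_submatrix_mul_det_submatrix (A : Matrix (Fin k) m R)
    (B : Matrix m (Fin k) R) :
    (A * B).det = ∑ γ ∈ (powersetCard k (univ : Finset m)).attach,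
      (A.submatrix id (γ.1.orderEmbOfFin (mem_powersetCard.mp γ.2).2)).det *
        (B.submatrix (γ.1.orderEmbOfFin (mem_powersetCard.mp γ.2).2) id).det := by
  classical
  have non_injective : ∀ p ∈ univ.filter fun p : Fin k → m => ¬ Function.Injective p,
      (∏ i, B (p i) i) * (A.submatrix id p).det = 0 := by
    intro p hp
    obtain ⟨i, j, hpij, hij⟩ := Function.not_injective_iff.mp (mem_filter.mp hp).2
    rw [det_zero_of_column_eq hij fun l => by simp [hpij], mul_zero]
  rw [det_mul_eq_sum_prod_mul_det_submatrix,
    ← sum_filter_add_sum_filter_not univ Function.Injective, sum_eq_zero non_injective, add_zero,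
    sum_filter_injective_eq_sum_powersetCard_sum_perm]
  refine sum_congr rfl fun γ _ => ?_
  rw [det_apply' (B.submatrix _ id), Finset.mul_sum]
  refine sum_congr rfl fun τ _ => ?_
  rw [show A.submatrix id (_ ∘ τ) = (A.submatrix id _).submatrix id τ from rfl, det_permute']
  simp only [submatrix_apply, id_eq, Function.comp_apply]
  ring

theorem Matrix.sum_det_submatrix_sq_eq_one_of_transpose_mul_self (M : Matrix m (Fin k) R)
    (hM : Mᵀ * M = 1) :
    ∑ γ ∈ (powersetCard k (univ : Finset m)).attach,
      (M.submatrix (γ.1.orderEmbOfFin (mem_powersetCard.mp γ.2).2) id).det ^ 2 = 1 := by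
  rw [← det_one (n := Fin k) (R := R), ← hM, det_mul_eq_sum_det_submatrix_mul_det_submatrix]
  refine sum_congr rfl fun γ _ => ?_
  rw [← transpose_submatrix, det_transpose, sq]

end CauchyBinet

section CoordinateMinors

open Matrix

noncomputable def coordProjL {n k : ℕ} (γ : Finset (Fin n)) (h : γ.card = k) :
    EuclideanSpace ℝ (Fin n) →ₗ[ℝ] EuclideanSpace ℝ (Fin k) where
  toFun := coordProj γ h
  map_add' _ _ := rfl
  map_smul' _ _ := rfl

theorem coordProjL_comp_toEuclideanLin {n k : ℕ} (γ : Finset (Fin n)) (h : γ.card = k)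
    (M : Matrix (Fin n) (Fin k) ℝ) :
    coordProjL γ h ∘ₗ M.toEuclideanLin = (M.submatrix (γ.orderEmbOfFin h) id).toEuclideanLin := by
  ext x i
  simp only [LinearMap.comp_apply]
  show (M.toEuclideanLin x) (γ.orderEmbOfFin h i) = _
  simp [mulVec]

theorem LinearMap.det_toEuclideanLin {k : ℕ} (M : Matrix (Fin k) (Fin k) ℝ) :
    LinearMap.det M.toEuclideanLin = M.det := by
  rw [toEuclideanLin_eq_toLin_orthonormal, LinearMap.det_toLin]

theorem LinearIsometry.toEuclideanLin_symm_transpose_mul_self {n k : ℕ}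
    (f : EuclideanSpace ℝ (Fin k) →ₗᵢ[ℝ] EuclideanSpace ℝ (Fin n)) :
    (toEuclideanLin.symm f.toLinearMap)ᵀ * toEuclideanLin.symm f.toLinearMap = 1 := by
  set M := toEuclideanLin.symm f.toLinearMap
  have hM : M.toEuclideanLin = f.toLinearMap := toEuclideanLin.apply_symm_apply _
  have col : ∀ i, WithLp.toLp 2 (Mᵀ i) = f (EuclideanSpace.single i 1) := fun i => by
    rw [← LinearIsometry.coe_toLinearMap, ← hM]
    ext l
    simp [mulVec_single]
  ext i j
  have := inner_matrix_col_col M M i j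
  rw [col, col, f.inner_map_map, conjTranspose_eq_transpose_of_trivial] at this
  rw [← this]
  simp [one_apply, EuclideanSpace.inner_single_left]

theorem sum_sq_det_coordProjL_comp_eq_one {n k : ℕ}
    (f : EuclideanSpace ℝ (Fin k) →ₗᵢ[ℝ] EuclideanSpace ℝ (Fin n)) :
    ∑ γ ∈ (powersetCard k (univ : Finset (Fin n))).attach,
      LinearMap.det (coordProjL γ.1 (mem_powersetCard.mp γ.2).2 ∘ₗ f.toLinearMap) ^ 2 = 1 := by
  set M := toEuclideanLin.symm f.toLinearMap
  have hf : f.toLinearMap = M.toEuclideanLin := (toEuclideanLin.apply_symm_apply _).symm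
  simp only [hf, coordProjL_comp_toEuclideanLin, LinearMap.det_toEuclideanLin]
  exact M.sum_det_submatrix_sq_eq_one_of_transpose_mul_self
    f.toEuclideanLin_symm_transpose_mul_self

end CoordinateMinors

theorem one_le_sum_abs_of_sum_sq_eq_one {α : Type*} {s : Finset α} {d : α → ℝ}
    (hd : ∑ i ∈ s, d i ^ 2 = 1) : 1 ≤ ∑ i ∈ s, |d i| := by
  have abs_le_one : ∀ i ∈ s, |d i| ≤ 1 := fun i hi => by
    rw [← sq_le_one_iff_abs_le_one, ← hd]
    exact single_le_sum (f := fun i => d i ^ 2) (fun _ _ => sq_nonneg _) hi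
  calc 1 = ∑ i ∈ s, |d i| * |d i| := by simp only [← sq, sq_abs, hd]
    _ ≤ ∑ i ∈ s, |d i| := sum_le_sum fun i hi =>
      mul_le_of_le_one_left (abs_nonneg _) (abs_le_one i hi)

theorem sum_abs_le_sqrt_card_of_sum_sq_eq_one {α : Type*} {s : Finset α} {d : α → ℝ}
    (hd : ∑ i ∈ s, d i ^ 2 = 1) : ∑ i ∈ s, |d i| ≤ √(s.card : ℝ) := by
  apply Real.le_sqrt_of_sq_le
  simpa only [sq_abs, hd, mul_one] using sq_sum_le_card_mul_sum_sq (s := s) (f := fun i => |d i|)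

theorem AffineSubspace.exists_linearIsometry_range_eq {E : Type*} [NormedAddCommGroup E]
    [InnerProductSpace ℝ E] {k : ℕ} (V : AffineSubspace ℝ E) [FiniteDimensional ℝ V.direction]
    (hV : Module.finrank ℝ V.direction = k) {p : E} (hp : p ∈ V) :
    ∃ f : EuclideanSpace ℝ (Fin k) →ₗᵢ[ℝ] E, (V : Set E) = Set.range fun x => p + f x := by
  let b := (stdOrthonormalBasis ℝ V.direction).reindex (finCongr hV)
  refine ⟨V.direction.subtypeₗᵢ.comp b.repr.symm.toLinearIsometry,
    Set.ext fun x => ⟨fun hx => ?_, ?_⟩⟩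
  · refine ⟨b.repr ⟨x - p, AffineSubspace.vsub_mem_direction hx hp⟩, ?_⟩
    simp
  · rintro ⟨y, rfl⟩
    simpa [add_comm] using AffineSubspace.vadd_mem_of_mem_direction (b.repr.symm y).2 hp

theorem hausdorffMeasure_image_add_linearMap {k : ℕ} (c : EuclideanSpace ℝ (Fin k))
    (L : EuclideanSpace ℝ (Fin k) →ₗ[ℝ] EuclideanSpace ℝ (Fin k))
    (T : Set (EuclideanSpace ℝ (Fin k))) :
    μH[k] ((fun x => c + L x) '' T) = ENNReal.ofReal |LinearMap.det L| * μH[k] T := by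
  have : Measure.IsAddHaarMeasure (μH[k] : Measure (EuclideanSpace ℝ (Fin k))) := by
    simpa only [finrank_euclideanSpace_fin] using
      isAddHaarMeasure_hausdorffMeasure (E := EuclideanSpace ℝ (Fin k))
  rw [← Set.image_image (c + ·) L T, Set.image_add_left, measure_preimage_add,
    Measure.addHaar_image_linearMap]

theorem projection_sandwich_general (k n : ℕ) (V : AffineSubspace ℝ (EuclideanSpace ℝ (Fin n)))
    (hV : Module.finrank ℝ V.direction = k)
    (S : Set (EuclideanSpace ℝ (Fin n))) (hSV : S ⊆ (V : Set (EuclideanSpace ℝ (Fin n)))) :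
    μH[k] S ≤
        (∑ γ ∈ (Finset.powersetCard k (Finset.univ : Finset (Fin n))).attach,
          μH[k] (coordProj γ.1 (Finset.mem_powersetCard.mp γ.2).2 '' S)) ∧
      (∑ γ ∈ (Finset.powersetCard k (Finset.univ : Finset (Fin n))).attach,
          μH[k] (coordProj γ.1 (Finset.mem_powersetCard.mp γ.2).2 '' S)) ≤
        ENNReal.ofReal (Real.sqrt (n.choose k)) * μH[k] S := by
  rcases S.eq_empty_or_nonempty with rfl | ⟨p, hpS⟩
  · simp
  obtain ⟨f, hf⟩ := V.exists_linearIsometry_range_eq hV (hSV hpS)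
  obtain ⟨T, rfl⟩ : ∃ T, (fun x => p + f x) '' T = S :=
    ⟨_, Set.image_preimage_eq_of_subset (hf ▸ hSV)⟩
  have measure_image : μH[k] ((fun x => p + f x) '' T) = μH[k] T :=
    ((IsometryEquiv.addLeft p).isometry.comp f.isometry).hausdorffMeasure_image
      (Or.inl k.cast_nonneg) T
  have measure_proj : ∀ (γ : Finset (Fin n)) (h : γ.card = k),
      μH[k] (coordProj γ h '' ((fun x => p + f x) '' T)) =
        ENNReal.ofReal |LinearMap.det (coordProjL γ h ∘ₗ f.toLinearMap)| * μH[k] T :=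
    fun γ h => by
      rw [Set.image_image, ← hausdorffMeasure_image_add_linearMap (coordProj γ h p)]
      exact congrArg (fun g => μH[k] (g '' T)) (funext fun x => (coordProjL γ h).map_add p (f x))
  have hd := sum_sq_det_coordProjL_comp_eq_one f
  simp only [measure_image, measure_proj, ← sum_mul,
    ← ENNReal.ofReal_sum_of_nonneg fun _ _ => abs_nonneg _]
  constructor
  · calc μH[k] T = ENNReal.ofReal 1 * μH[k] T := by rw [ENNReal.ofReal_one, one_mul]
      _ ≤ _ := by gcongr; exact one_le_sum_abs_of_sum_sq_eq_one hd
  · gcongr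
    simpa using sum_abs_le_sqrt_card_of_sum_sq_eq_one hd

/-- **Projection sandwich for subsets of `k`-planes**: if `S` is a Borel subset of a
`k`-dimensional affine subspace `V` of `ℝⁿ`, then
`μH[k](S) ≤ Σ_γ μH[k](π_γ '' S) ≤ √(C(n,k)) · μH[k](S)`, the sum running over all
`k`-element coordinate subsets `γ`. -/
theorem projection_sandwich (k n : ℕ) (V : AffineSubspace ℝ (EuclideanSpace ℝ (Fin n)))
    (hV : Module.finrank ℝ V.direction = k)
    (S : Set (EuclideanSpace ℝ (Fin n))) (hSV : S ⊆ (V : Set (EuclideanSpace ℝ (Fin n))))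
    (hS : MeasurableSet S) :
    μH[k] S ≤
        (∑ γ ∈ (Finset.powersetCard k (Finset.univ : Finset (Fin n))).attach,
          μH[k] (coordProj γ.1 (Finset.mem_powersetCard.mp γ.2).2 '' S)) ∧
      (∑ γ ∈ (Finset.powersetCard k (Finset.univ : Finset (Fin n))).attach,
          μH[k] (coordProj γ.1 (Finset.mem_powersetCard.mp γ.2).2 '' S)) ≤
        ENNReal.ofReal (Real.sqrt (n.choose k)) * μH[k] S :=
  projection_sandwich_general k n V hV S hSV
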